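/- arXiv:2407.19067 — 2 statements merged into one kernel-verified Lean document; each statement's English description precedes it below -/
import Mathlib

section
/- Let A be a unital ring. Suppose e_1, …, e_n and f_1, …, f_n are two collections of mutually orthogonal idempotents of A such that e_i is Murray–von Neumann equivalent to f_i for all i, and such that e_1 + ⋯ + e_n = f_1 + ⋯ + f_n = 1. Then there exists an invertible element a ∈ A such that a⁻¹ e_i a = f_i for all i = 1, …, n. -/
theorem conjugate_orthogonal_idempotents {A : Type*} [Ring A] (n : ℕ)
    (e f : Fin n → A)
    (he : ∀ i, IsIdempotentElem (e i)) (hf : ∀ i, IsIdempotentElem (f i))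
    (heorth : ∀ i j, i ≠ j → e i * e j = 0)
    (hforth : ∀ i j, i ≠ j → f i * f j = 0)
    (hequiv : ∀ i, ∃ u v : A, e i = u * v ∧ f i = v * u)
    (hesum : ∑ i, e i = 1) (hfsum : ∑ i, f i = 1) :
    ∃ a : Aˣ, ∀ i, (↑a⁻¹ : A) * e i * (↑a : A) = f i := by
  choose u v huv hvu using hequiv
  set u' : Fin n → A := fun i => e i * u i * f i with hu'
  set v' : Fin n → A := fun i => f i * v i * e i with hv'
  -- basic identities
  have huv' : ∀ i, u' i * v' i = e i := by
    intro i
    have h1 : e i * u i * f i * (f i * v i * e i)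
        = e i * ((u i * v i) * ((u i * v i) * (u i * v i))) * e i := by
      rw [hvu i]; noncomm_ring
    simp only [hu', hv']
    rw [h1, ← huv i, (he i).eq, (he i).eq, (he i).eq, (he i).eq]
  have hvu' : ∀ i, v' i * u' i = f i := by
    intro i
    have h1 : f i * v i * e i * (e i * u i * f i)
        = f i * ((v i * u i) * ((v i * u i) * (v i * u i))) * f i := by
      rw [huv i]; noncomm_ring
    simp only [hu', hv']
    rw [h1, ← hvu i, (hf i).eq, (hf i).eq, (hf i).eq, (hf i).eq]
  have hvu0 : ∀ j k, j ≠ k → v' j * u' k = 0 := by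
    intro j k hjk
    have h1 : f j * v j * e j * (e k * u k * f k)
        = f j * v j * (e j * e k) * (u k * f k) := by noncomm_ring
    simp only [hu', hv', h1, heorth j k hjk, mul_zero, zero_mul]
  have hve0 : ∀ j i, j ≠ i → v' j * e i = 0 := by
    intro j i hji
    have h1 : f j * v j * e j * e i = f j * v j * (e j * e i) := by noncomm_ring
    simp only [hv', h1, heorth j i hji, mul_zero]
  have hve : ∀ i, v' i * e i = v' i := by
    intro i
    simp only [hv', mul_assoc, (he i).eq]
  set a : A := ∑ j, u' j with ha
  set b : A := ∑ j, v' j with hb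
  have hab : a * b = 1 := by
    rw [ha, hb, Finset.sum_mul_sum, ← hesum]
    apply Finset.sum_congr rfl
    intro j _
    rw [Finset.sum_eq_single j]
    · exact huv' j
    · intro k _ hkj
      have h1 : e j * u j * f j * (f k * v k * e k)
          = e j * u j * (f j * f k) * (v k * e k) := by noncomm_ring
      simp only [hu', hv', h1, hforth j k (Ne.symm hkj), mul_zero, zero_mul]
    · intro h; exact absurd (Finset.mem_univ j) h
  have hba : b * a = 1 := by
    rw [ha, hb, Finset.sum_mul_sum, ← hfsum]
    apply Finset.sum_congr rfl
    intro j _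
    rw [Finset.sum_eq_single j]
    · exact hvu' j
    · intro k _ hkj
      exact hvu0 j k (Ne.symm hkj)
    · intro h; exact absurd (Finset.mem_univ j) h
  refine ⟨⟨a, b, hab, hba⟩, fun i => ?_⟩
  show b * e i * a = f i
  have hbe : b * e i = v' i := by
    rw [hb, Finset.sum_mul, Finset.sum_eq_single i]
    · exact hve i
    · intro k _ hki; exact hve0 k i hki
    · intro h; exact absurd (Finset.mem_univ i) h
  rw [hbe, ha, Finset.mul_sum, Finset.sum_eq_single i]
  · exact hvu' i
  · intro k _ hki; exact hvu0 i k (Ne.symm hki)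
  · intro h; exact absurd (Finset.mem_univ i) h
end

section
/- Let R be a nontrivial unital ring (1 ≠ 0) containing elements s_1, s_2, t_1, t_2 satisfying t_i s_j = δ_{ij}·1 for i, j ∈ {1,2}. Then there is no invertible element u ∈ R such that s_1 x t_1 + s_2 x t_2 = u x u⁻¹ for all x ∈ R; that is, the map φ(x) = s_1 x t_1 + s_2 x t_2 is not an inner automorphism of R. -/
theorem cuntz_map_not_inner {R : Type*} [Ring R] [Nontrivial R]
    (s₁ s₂ t₁ t₂ : R)
    (h11 : t₁ * s₁ = 1) (h22 : t₂ * s₂ = 1)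
    (h12 : t₁ * s₂ = 0) (h21 : t₂ * s₁ = 0) :
    ¬ ∃ u : Rˣ, ∀ x : R, s₁ * x * t₁ + s₂ * x * t₂ = (↑u : R) * x * (↑u⁻¹ : R) := by
  rintro ⟨u, h⟩
  have huu : ∀ r : R, (↑u : R) * ((↑u⁻¹ : R) * r) = r := fun r => by
    rw [← mul_assoc, u.mul_inv, one_mul]
  have hiu : ∀ r : R, (↑u⁻¹ : R) * ((↑u : R) * r) = r := fun r => by
    rw [← mul_assoc, u.inv_mul, one_mul]
  obtain ⟨a₁, a₂, b₁, b₂, ba11, ba22, ba12, ba21, key⟩ :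
      ∃ a₁ a₂ b₁ b₂ : R, b₁ * a₁ = 1 ∧ b₂ * a₂ = 1 ∧ b₁ * a₂ = 0 ∧ b₂ * a₁ = 0 ∧
        ∀ x : R, a₁ * x * b₁ + a₂ * x * b₂ = x := by
    refine ⟨↑u⁻¹ * s₁, ↑u⁻¹ * s₂, t₁ * ↑u, t₂ * ↑u, ?_, ?_, ?_, ?_, ?_⟩
    · rw [mul_assoc, huu, h11]
    · rw [mul_assoc, huu, h22]
    · rw [mul_assoc, huu, h12]
    · rw [mul_assoc, huu, h21]
    · intro x
      have hx := h x
      have : (↑u⁻¹ : R) * (s₁ * x * t₁ + s₂ * x * t₂) * ↑u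
          = (↑u⁻¹ : R) * ((↑u : R) * x * (↑u⁻¹ : R)) * ↑u := by rw [hx]
      calc (↑u⁻¹ * s₁) * x * (t₁ * ↑u) + (↑u⁻¹ * s₂) * x * (t₂ * ↑u)
          = (↑u⁻¹ : R) * (s₁ * x * t₁ + s₂ * x * t₂) * ↑u := by noncomm_ring
        _ = (↑u⁻¹ : R) * ((↑u : R) * x * (↑u⁻¹ : R)) * ↑u := this
        _ = x := by
            rw [mul_assoc (↑u : R) x, hiu, mul_assoc, u.inv_mul, mul_one]
  have ab11 : a₁ * b₁ = 1 := by
    have k1 := congrArg (fun y => b₁ * y) (key a₁)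
    simp only [mul_add, ← mul_assoc, ba11, ba12, one_mul, zero_mul, add_zero] at k1
    exact k1
  have ab22 : a₂ * b₂ = 1 := by
    have k2 := congrArg (fun y => b₂ * y) (key a₂)
    simp only [mul_add, ← mul_assoc, ba22, ba21, one_mul, zero_mul, zero_add] at k2
    exact k2
  have k3 := key 1
  rw [mul_one, mul_one, ab11, ab22] at k3
  exact one_ne_zero (add_eq_right.mp k3)
end
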